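/- arXiv:2101.12198 — 4 statements merged into one kernel-verified Lean document; each statement's English description precedes it below -/
import Mathlib

section
/- Let H, D, L be real symmetric N×N matrices with D positive diagonal, L positive semidefinite with L·𝟏 = 0, and H = -L + D. If H has exactly one positive eigenvalue, then D^{-1/2} H D^{-1/2} has exactly one eigenvalue equal to 1 (with eigenvector D^{1/2}𝟏) and all other eigenvalues are in (-∞, 0]. -/
/-! Since `L𝟏 = 0` we have `H𝟏 = D𝟏`, so `M = D^{-1/2} H D^{-1/2}` fixes `D^{1/2}𝟏` and `1` is an
eigenvalue of `M`. The number of positive eigenvalues of a symmetric matrix bounds the dimension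
of every subspace on which its quadratic form is positive definite, and is attained by the span of
the corresponding eigenvectors. As `M = Pᵀ H P` with `P = D^{-1/2}`, such a subspace for `M` is
carried by `P` to one for `H`, so `M` has at most one positive eigenvalue, namely `1`. -/

open Matrix Module

namespace Matrix.IsHermitian

variable {n : Type*} [Fintype n] [DecidableEq n] {A : Matrix n n ℝ} (hA : A.IsHermitian)

lemma eigenvectorBasis_dotProduct_eigenvectorBasis (i j : n) :
    ⇑(hA.eigenvectorBasis i) ⬝ᵥ ⇑(hA.eigenvectorBasis j) = if i = j then 1 else 0 := by
  rw [← orthonormal_iff_ite.mp hA.eigenvectorBasis.orthonormal i j,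
    EuclideanSpace.inner_eq_star_dotProduct, star_trivial, dotProduct_comm]

lemma eigenvectorBasis_dotProduct_mulVec (i : n) (x : n → ℝ) :
    ⇑(hA.eigenvectorBasis i) ⬝ᵥ A *ᵥ x = hA.eigenvalues i * (⇑(hA.eigenvectorBasis i) ⬝ᵥ x) := by
  rw [dotProduct_mulVec, ← mulVec_transpose, ← conjTranspose_eq_transpose_of_trivial, hA.eq,
    hA.mulVec_eigenvectorBasis, smul_dotProduct, smul_eq_mul]

lemma dotProduct_mulVec_eq_sum (x : n → ℝ) :
    x ⬝ᵥ A *ᵥ x = ∑ i, hA.eigenvalues i * (⇑(hA.eigenvectorBasis i) ⬝ᵥ x) ^ 2 := by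
  have h := hA.eigenvectorBasis.sum_inner_mul_inner (WithLp.toLp 2 x) (WithLp.toLp 2 (A *ᵥ x))
  simp only [EuclideanSpace.inner_eq_star_dotProduct, star_trivial] at h
  rw [dotProduct_comm, ← h]
  refine Finset.sum_congr rfl fun i _ => ?_
  rw [dotProduct_comm (A *ᵥ x), hA.eigenvectorBasis_dotProduct_mulVec]
  ring

lemma finrank_le_card_pos_eigenvalues {F : Type*} [AddCommGroup F] [Module ℝ F]
    [FiniteDimensional ℝ F] (f : F →ₗ[ℝ] n → ℝ) (hf : ∀ x ≠ 0, 0 < f x ⬝ᵥ A *ᵥ f x) :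
    finrank ℝ F ≤ Fintype.card {i // 0 < hA.eigenvalues i} := by
  let π := (Matrix.of fun i : {i // 0 < hA.eigenvalues i} => ⇑(hA.eigenvectorBasis i)).mulVecLin
  have hinj : Function.Injective (π ∘ₗ f) := by
    refine (injective_iff_map_eq_zero _).mpr fun x hx => ?_
    by_contra hx0
    refine (hf x hx0).not_ge ?_
    rw [hA.dotProduct_mulVec_eq_sum]
    refine Finset.sum_nonpos fun i _ => ?_
    by_cases hi : 0 < hA.eigenvalues i
    · have : ⇑(hA.eigenvectorBasis i) ⬝ᵥ f x = 0 := congrFun hx ⟨i, hi⟩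
      simp [this]
    · exact mul_nonpos_of_nonpos_of_nonneg (not_lt.mp hi) (sq_nonneg _)
  simpa using LinearMap.finrank_le_finrank_of_injective hinj

lemma exists_linearMap_dotProduct_mulVec_pos :
    ∃ f : ({i // 0 < hA.eigenvalues i} → ℝ) →ₗ[ℝ] n → ℝ, ∀ c ≠ 0, 0 < f c ⬝ᵥ A *ᵥ f c := by
  refine ⟨Fintype.linearCombination ℝ fun i => ⇑(hA.eigenvectorBasis i), fun c hc => ?_⟩
  have hcoord (j : n) : ⇑(hA.eigenvectorBasis j) ⬝ᵥ
      Fintype.linearCombination ℝ (fun i : {i // 0 < hA.eigenvalues i} =>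
        ⇑(hA.eigenvectorBasis i)) c = if h : 0 < hA.eigenvalues j then c ⟨j, h⟩ else 0 := by
    simp only [Fintype.linearCombination_apply, dotProduct_sum, dotProduct_smul,
      hA.eigenvectorBasis_dotProduct_eigenvectorBasis, smul_eq_mul, mul_ite, mul_one, mul_zero]
    split_ifs with hj
    · rw [← Fintype.sum_ite_eq ⟨j, hj⟩ c]
      simp only [Subtype.ext_iff]
    · exact Finset.sum_eq_zero fun i _ => if_neg (by rintro rfl; exact hj i.2)
  obtain ⟨i, hi⟩ := Function.ne_iff.mp hc
  rw [hA.dotProduct_mulVec_eq_sum]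
  refine Finset.sum_pos' (fun j _ => ?_) ⟨i, Finset.mem_univ _, ?_⟩
  · rw [hcoord]
    split_ifs with hj
    · positivity
    · simp
  · rw [hcoord, dif_pos i.2]
    exact mul_pos i.2 (sq_pos_of_ne_zero hi)

lemma exists_eigenvalues_eq_of_mulVec_eq {v : n → ℝ} {μ : ℝ} (hv : v ≠ 0) (h : A *ᵥ v = μ • v) :
    ∃ i, hA.eigenvalues i = μ := by
  have hdet : (algebraMap ℝ (Matrix n n ℝ) μ - A).det = 0 :=
    exists_mulVec_eq_zero_iff.mp ⟨v, hv, by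
      rw [sub_mulVec, h, Algebra.algebraMap_eq_smul_one, smul_mulVec, one_mulVec, sub_self]⟩
  have hμ : μ ∈ spectrum ℝ A := by
    rw [spectrum.mem_iff, isUnit_iff_isUnit_det, hdet]
    exact not_isUnit_zero
  rwa [hA.spectrum_real_eq_range_eigenvalues] at hμ

lemma card_pos_eigenvalues_le_of_eq_transpose_mul_mul {B : Matrix n n ℝ} (hB : B.IsHermitian)
    (P : Matrix n n ℝ) (hBA : B = Pᵀ * A * P) :
    Fintype.card {i // 0 < hB.eigenvalues i} ≤ Fintype.card {i // 0 < hA.eigenvalues i} := by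
  obtain ⟨f, hf⟩ := hB.exists_linearMap_dotProduct_mulVec_pos
  refine le_of_eq_of_le (finrank_fintype_fun_eq_card ℝ).symm
    (hA.finrank_le_card_pos_eigenvalues (P.mulVecLin ∘ₗ f) fun c hc => ?_)
  simpa [hBA, ← mulVec_mulVec, dotProduct_mulVec _ Pᵀ, vecMul_transpose] using hf c hc

end Matrix.IsHermitian

lemma forall_eq_one_or_nonpos_of_card_pos_le_one {ι : Type*} [Fintype ι] {f : ι → ℝ}
    (hf : Fintype.card {i // 0 < f i} ≤ 1) {k : ι} (hk : f k = 1) :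
    (∃! i, f i = 1) ∧ ∀ i, f i = 1 ∨ f i ≤ 0 := by
  have hpos (i : ι) (hi : 0 < f i) : i = k :=
    congrArg Subtype.val (Fintype.card_le_one_iff.mp hf ⟨i, hi⟩ ⟨k, by simp [hk]⟩)
  refine ⟨⟨k, hk, fun i hi => hpos i (by simp [hi])⟩, fun i => ?_⟩
  by_cases hi : 0 < f i
  · exact .inl (hpos i hi ▸ hk)
  · exact .inr (not_lt.mp hi)

lemma diagonal_inv_sqrt_mul_mul_mulVec_sqrt {n : Type*} [Fintype n] [DecidableEq n]
    {H : Matrix n n ℝ} {d : n → ℝ} (hd : ∀ i, 0 < d i) (hH : H *ᵥ (fun _ => 1) = d) :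
    (diagonal (fun i => (√(d i))⁻¹) * H * diagonal (fun i => (√(d i))⁻¹)) *ᵥ (fun i => √(d i)) =
      fun i => √(d i) := by
  have hsqrt (i : n) : √(d i) ≠ 0 := (Real.sqrt_pos.mpr (hd i)).ne'
  have hone : diagonal (fun i => (√(d i))⁻¹) *ᵥ (fun i => √(d i)) = fun _ => 1 := by
    ext i
    simp [mulVec_diagonal, hsqrt i]
  rw [← mulVec_mulVec, ← mulVec_mulVec, hone, hH]
  ext i
  rw [mulVec_diagonal, inv_mul_eq_div, div_eq_iff (hsqrt i), Real.mul_self_sqrt (hd i).le]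

theorem stmt4_general (N : ℕ) (H D L : Matrix (Fin N) (Fin N) ℝ)
    (hDdiag : D.IsDiag) (hDpos : ∀ i, 0 < D i i)
    (hL1 : L.mulVec (fun _ => 1) = 0)
    (hH : H = -L + D)
    (hHherm : H.IsHermitian)
    (hone : ∃! i, 0 < hHherm.eigenvalues i) :
    (((Matrix.diagonal fun i => (Real.sqrt (D i i))⁻¹) * H *
        (Matrix.diagonal fun i => (Real.sqrt (D i i))⁻¹)).mulVec
        (fun i => Real.sqrt (D i i)) = fun i => Real.sqrt (D i i)) ∧
    ∀ (hM : ((Matrix.diagonal fun i => (Real.sqrt (D i i))⁻¹) * H *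
        (Matrix.diagonal fun i => (Real.sqrt (D i i))⁻¹)).IsHermitian),
      (∃! i, hM.eigenvalues i = 1) ∧
      (∀ i, hM.eigenvalues i = 1 ∨ hM.eigenvalues i ≤ 0) := by
  have hH1 : H *ᵥ (fun _ => 1) = fun i => D i i := by
    rw [hH, add_mulVec, neg_mulVec, hL1, neg_zero, zero_add, ← hDdiag.diagonal_diag]
    ext i
    simp [mulVec_diagonal]
  have hfix := diagonal_inv_sqrt_mul_mul_mulVec_sqrt hDpos hH1
  refine ⟨hfix, fun hM => ?_⟩
  obtain ⟨i₀, hi₀, huniq⟩ := hone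
  have hv : (fun i => √(D i i)) ≠ 0 := fun h =>
    (Real.sqrt_pos.mpr (hDpos i₀)).ne' (congrFun h i₀)
  obtain ⟨k, hk⟩ := hM.exists_eigenvalues_eq_of_mulVec_eq hv (by rw [hfix, one_smul])
  have hcard : Fintype.card {i // 0 < hHherm.eigenvalues i} = 1 :=
    Fintype.card_eq_one_iff.mpr ⟨⟨i₀, hi₀⟩, fun i => Subtype.ext (huniq i i.2)⟩
  refine forall_eq_one_or_nonpos_of_card_pos_le_one ?_ hk
  exact hcard ▸
    hHherm.card_pos_eigenvalues_le_of_eq_transpose_mul_mul hM _ (by rw [diagonal_transpose])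

/-- If `H = -L + D` with `D` positive diagonal, `L` PSD with `L·𝟏 = 0`, and `H`
has exactly one positive eigenvalue, then `D^{-1/2} H D^{-1/2}` has exactly one eigenvalue
equal to `1`, with eigenvector `D^{1/2}𝟏`, and all other eigenvalues in `(-∞, 0]`. -/
theorem stmt4 (N : ℕ) (H D L : Matrix (Fin N) (Fin N) ℝ)
    (hDdiag : D.IsDiag) (hDpos : ∀ i, 0 < D i i)
    (hL : L.PosSemidef) (hL1 : L.mulVec (fun _ => 1) = 0)
    (hH : H = -L + D)
    (hHherm : H.IsHermitian)
    (hone : ∃! i, 0 < hHherm.eigenvalues i) :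
    (((Matrix.diagonal fun i => (Real.sqrt (D i i))⁻¹) * H *
        (Matrix.diagonal fun i => (Real.sqrt (D i i))⁻¹)).mulVec
        (fun i => Real.sqrt (D i i)) = fun i => Real.sqrt (D i i)) ∧
    ∀ (hM : ((Matrix.diagonal fun i => (Real.sqrt (D i i))⁻¹) * H *
        (Matrix.diagonal fun i => (Real.sqrt (D i i))⁻¹)).IsHermitian),
      (∃! i, hM.eigenvalues i = 1) ∧
      (∀ i, hM.eigenvalues i = 1 ∨ hM.eigenvalues i ≤ 0) :=
  stmt4_general N H D L hDdiag hDpos hL1 hH hHherm hone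
end

section
/- Let H, D, L be as follows: D positive diagonal, L symmetric positive semidefinite with L·𝟏 = 0 and ker(L) one-dimensional, and suppose D^{-1/2}(-L+D)D^{-1/2} has exactly one positive eigenvalue. Then -D^{-1}L has exactly one eigenvalue equal to 0, and all its other eigenvalues lie in (-∞, -1]. -/
/-!
If `-D⁻¹L w = μ w` then `L w = -μ D w`, so the symmetric matrix
`M = D^{-1/2}(-L + D)D^{-1/2}` satisfies `M (D^{1/2} w) = (μ + 1) D^{1/2} w`. Taking `w = 𝟏`
(where `μ = 0`) shows that `1` is a positive eigenvalue of `M`; as `M` has only one positive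
eigenvalue, every other eigenvalue `μ` of `-D⁻¹L` has `μ + 1 ≤ 0`.
-/

namespace Matrix

variable {n : Type*} [Fintype n] [DecidableEq n]

theorem IsHermitian.exists_eigenvalues_eq {A : Matrix n n ℝ} (hA : A.IsHermitian) {μ : ℝ}
    {v : n → ℝ} (hv : v ≠ 0) (hAv : A *ᵥ v = μ • v) : ∃ i, hA.eigenvalues i = μ := by
  have hμ : Module.End.HasEigenvalue (toLin' A) μ :=
    Module.End.hasEigenvalue_of_hasEigenvector (x := v) ⟨by simpa using hAv, hv⟩
  rw [← Set.mem_range, ← hA.spectrum_real_eq_range_eigenvalues, ← spectrum_toLin']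
  exact hμ.mem_spectrum

theorem IsHermitian.eq_of_existsUnique_pos_eigenvalues {A : Matrix n n ℝ} (hA : A.IsHermitian)
    (huniq : ∃! i, 0 < hA.eigenvalues i) {a b : ℝ} {u v : n → ℝ} (hu : u ≠ 0) (hv : v ≠ 0)
    (hAu : A *ᵥ u = a • u) (hAv : A *ᵥ v = b • v) (ha : 0 < a) (hb : 0 < b) : a = b := by
  obtain ⟨i, rfl⟩ := hA.exists_eigenvalues_eq hu hAu
  obtain ⟨j, rfl⟩ := hA.exists_eigenvalues_eq hv hAv
  rw [huniq.unique ha hb]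

variable {K : Type*} [Field K]

theorem neg_inv_mul_mulVec_eq_smul_iff {D L : Matrix n n K} (hD : IsUnit D.det) {w : n → K}
    {μ : K} : -(D⁻¹ * L) *ᵥ w = μ • w ↔ L *ᵥ w = -μ • D *ᵥ w := by
  have := D.invertibleOfIsUnitDet hD
  rw [neg_mulVec, neg_eq_iff_eq_neg, ← neg_smul, ← mulVec_mulVec, ← mulVec_smul]
  exact ⟨fun h => by rw [← h, mulVec_mulVec, mul_inv_of_invertible, one_mulVec],
    inv_mulVec_eq_vec⟩

theorem vecMul_diag_neg_inv_mul_eq_zero {D L : Matrix n n K} (hD : IsUnit D.det) (hL : Lᵀ = L)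
    (hL1 : L *ᵥ 1 = 0) : (1 ᵥ* D) ᵥ* -(D⁻¹ * L) = 0 := by
  rw [vecMul_neg, ← vecMul_vecMul, vecMul_vecMul 1 D, mul_nonsing_inv D hD, vecMul_one,
    ← mulVec_transpose, hL, hL1, neg_zero]

theorem diagonal_inv_mul_mul_diagonal_inv_mulVec {s : n → K} (hs : ∀ i, s i ≠ 0)
    {A : Matrix n n K} {w : n → K} {c : K} (h : A *ᵥ w = c • diagonal (s * s) *ᵥ w) :
    (diagonal s⁻¹ * A * diagonal s⁻¹) *ᵥ (s * w) = c • (s * w) := by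
  have hw : diagonal s⁻¹ *ᵥ (s * w) = w := by
    ext i; simp [mulVec_diagonal, hs i]
  rw [← mulVec_mulVec, ← mulVec_mulVec, hw, h, mulVec_smul]
  congr 1
  ext i
  simp only [mulVec_diagonal, Pi.inv_apply, Pi.mul_apply]
  field_simp [hs i]

theorem isUnit_det_diagonal_mul_self {s : n → K} (hs : ∀ i, s i ≠ 0) :
    IsUnit (diagonal (s * s)).det := by
  rw [det_diagonal]
  exact (Finset.prod_ne_zero_iff.2 fun i _ => mul_ne_zero (hs i) (hs i)).isUnit

theorem eigenvalue_neg_inv_mul_eq_zero_or_le_neg_one {D L : Matrix n n ℝ} {s : n → ℝ}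
    (hs : ∀ i, s i ≠ 0) (hD : D = diagonal (s * s)) (hL1 : L *ᵥ 1 = 0)
    (hM : (diagonal s⁻¹ * (-L + D) * diagonal s⁻¹).IsHermitian)
    (hone : ∃! i, 0 < hM.eigenvalues i) {μ : ℝ} {w : n → ℝ} (hw : w ≠ 0)
    (h : -(D⁻¹ * L) *ᵥ w = μ • w) : μ = 0 ∨ μ ≤ -1 := by
  rw [neg_inv_mul_mulVec_eq_smul_iff (hD ▸ isUnit_det_diagonal_mul_self hs)] at h
  obtain ⟨i, hi⟩ := Function.ne_iff.mp hw
  have h1 : (diagonal s⁻¹ * (-L + D) * diagonal s⁻¹) *ᵥ (s * 1) = (1 : ℝ) • (s * 1) :=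
    diagonal_inv_mul_mul_diagonal_inv_mulVec hs (by rw [add_mulVec, neg_mulVec, hL1, ← hD]; simp)
  have hμ : (diagonal s⁻¹ * (-L + D) * diagonal s⁻¹) *ᵥ (s * w) = (μ + 1) • (s * w) :=
    diagonal_inv_mul_mul_diagonal_inv_mulVec hs
      (by rw [add_mulVec, neg_mulVec, h, ← hD]; module)
  by_contra! hne
  have := hM.eq_of_existsUnique_pos_eigenvalues hone (Function.ne_iff.mpr ⟨i, by simp [hs i]⟩)
    (Function.ne_iff.mpr ⟨i, mul_ne_zero (hs i) hi⟩) h1 hμ one_pos (by linarith)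
  exact hne.1 (by linarith)

end Matrix

open Matrix in
/-- With `D` positive diagonal, `L` PSD with `L·𝟏 = 0` and one-dimensional
kernel, and `D^{-1/2}(-L+D)D^{-1/2}` having exactly one positive eigenvalue, the matrix
`-D⁻¹L` has exactly one eigenvalue equal to `0` (right eigenvector `𝟏`, left eigenvector
`D𝟏`), and all its other eigenvalues lie in `(-∞, -1]`. -/
theorem stmt5 (N : ℕ) (D L : Matrix (Fin N) (Fin N) ℝ)
    (hDdiag : D.IsDiag) (hDpos : ∀ i, 0 < D i i)
    (hL : L.PosSemidef) (hL1 : L.mulVec (fun _ => 1) = 0)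
    (hker : ∀ w : Fin N → ℝ, L.mulVec w = 0 → ∃ c : ℝ, w = fun _ => c)
    (hone : ∀ (hM : ((Matrix.diagonal fun i => (Real.sqrt (D i i))⁻¹) * (-L + D) *
        (Matrix.diagonal fun i => (Real.sqrt (D i i))⁻¹)).IsHermitian),
      ∃! i, 0 < hM.eigenvalues i) :
    ((-(D⁻¹ * L)).mulVec (fun _ => 1) = 0) ∧
    (∀ w : Fin N → ℝ, (-(D⁻¹ * L)).mulVec w = 0 → ∃ c : ℝ, w = fun _ => c) ∧
    (Matrix.vecMul (fun i => D i i) (-(D⁻¹ * L)) = 0) ∧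
    (∀ (μ : ℝ) (w : Fin N → ℝ), w ≠ 0 → (-(D⁻¹ * L)).mulVec w = μ • w →
      μ = 0 ∨ μ ≤ -1) := by
  set s : Fin N → ℝ := fun i => √(D i i)
  have hs : ∀ i, s i ≠ 0 := fun i => (Real.sqrt_pos.2 (hDpos i)).ne'
  have hD : D = diagonal (s * s) := by
    conv_lhs => rw [← hDdiag.diagonal_diag]
    exact congrArg diagonal (funext fun i => (Real.mul_self_sqrt (hDpos i).le).symm)
  have hdet : IsUnit D.det := hD ▸ isUnit_det_diagonal_mul_self hs
  have hLt : Lᵀ = L := by simpa using hL.isHermitian.eq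
  have hM : (diagonal s⁻¹ * (-L + D) * diagonal s⁻¹).IsHermitian := by
    simpa using isHermitian_mul_mul_conjTranspose (diagonal s⁻¹)
      (hL.isHermitian.neg.add (hD ▸ isHermitian_diagonal _))
  refine ⟨?_, fun w hw => hker w ?_, ?_, fun μ w hw h => ?_⟩
  · simp [neg_mulVec, ← mulVec_mulVec, hL1]
  · simpa using (neg_inv_mul_mulVec_eq_smul_iff hdet (μ := 0)).1 (by simpa using hw)
  · have hdiag : (fun i => D i i) = 1 ᵥ* D := by
      ext i
      simp [hD, vecMul_diagonal]
    rw [hdiag]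
    exact vecMul_diag_neg_inv_mul_eq_zero hdet hLt hL1
  · exact eigenvalue_neg_inv_mul_eq_zero_or_le_neg_one hs hD hL1 hM (hone hM) hw h
end

section
/- Let a_1, ..., a_{d-1} ∈ ℤ^d and b_1, ..., b_{d-1} nonzero integers with |b_i| ≤ B for all i, such that the points a_i/b_i are affinely independent. Then the (d-2)-dimensional volume of the simplex conv(a_1/b_1, ..., a_{d-1}/b_{d-1}) is at least 1/(d! · B^{2d}). -/
/-!
Write the columns of the edge matrix `M` as `x i - x last = v i / (b i * b last)` with
`v i = b last * a i - b i * a last ∈ ℤ^d`, i.e. `M = N * diag c` with `N` an integer matrix and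
`c i = (b i * b last)⁻¹`. Then `det (Mᵀ M) = (∏ c i)² * det (Nᵀ N)`, and `det (Nᵀ N)` is an
integer which is positive by affine independence, hence at least `1`. So
`√det (Mᵀ M) ≥ |∏ c i| ≥ B^(-2(d-2))`, which is more than the claimed bound.
-/

open Matrix

theorem AffineIndependent.linearIndependent_sub_last {k V : Type*} [Ring k] [AddCommGroup V]
    [Module k V] {n : ℕ} {x : Fin (n + 1) → V} (hx : AffineIndependent k x) :
    LinearIndependent k fun i : Fin n => x i.castSucc - x (Fin.last n) := by
  have h := (affineIndependent_iff_linearIndependent_vsub k x (Fin.last n)).mp hx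
  exact h.comp (fun i => ⟨i.castSucc, (Fin.castSucc_lt_last i).ne⟩) fun i j hij =>
    Fin.castSucc_inj.mp (congrArg Subtype.val hij)

namespace Matrix

variable {m n : Type*} [Fintype m] [Fintype n] [DecidableEq n]

theorem det_transpose_mul_self_pos {M : Matrix m n ℝ} (hM : LinearIndependent ℝ M.col) :
    0 < (Mᵀ * M).det := by
  simpa [conjTranspose_eq_transpose_of_trivial] using
    (PosDef.conjTranspose_mul_self M (mulVec_injective_iff.mpr hM)).det_pos

theorem det_transpose_mul_self_mul_diagonal {R : Type*} [CommRing R] (A : Matrix m n R)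
    (c : n → R) :
    ((A * diagonal c)ᵀ * (A * diagonal c)).det = (∏ i, c i) ^ 2 * (Aᵀ * A).det := by
  rw [transpose_mul, diagonal_transpose, Matrix.mul_assoc, ← Matrix.mul_assoc Aᵀ, det_mul,
    det_mul, det_diagonal]
  ring

theorem abs_prod_le_sqrt_det_transpose_mul_self {M : Matrix m n ℝ} (N : Matrix m n ℤ)
    (c : n → ℝ) (hMN : M = N.map (Int.cast : ℤ → ℝ) * diagonal c)
    (hM : LinearIndependent ℝ M.col) :
    |∏ i, c i| ≤ √(Mᵀ * M).det := by
  have hdet : (Mᵀ * M).det = (∏ i, c i) ^ 2 * ((Nᵀ * N).det : ℝ) := by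
    rw [hMN, det_transpose_mul_self_mul_diagonal, Int.cast_det, ← transpose_map]
    exact congrArg (_ * det ·) (Matrix.map_mul (f := Int.castRingHom ℝ)).symm
  have hN : (1 : ℝ) ≤ (Nᵀ * N).det := by
    have hpos := det_transpose_mul_self_pos hM
    rw [hdet] at hpos
    exact_mod_cast (pos_of_mul_pos_right hpos (sq_nonneg _) : (0 : ℝ) < _)
  rw [← Real.sqrt_sq_eq_abs, hdet]
  exact Real.sqrt_le_sqrt (le_mul_of_one_le_right (sq_nonneg _) hN)

end Matrix

theorem inv_sq_le_abs_inv_mul {B p q : ℤ} (hp : p ≠ 0) (hq : q ≠ 0) (hpB : |p| ≤ B)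
    (hqB : |q| ≤ B) : ((B : ℝ) ^ 2)⁻¹ ≤ |((p : ℝ) * q)⁻¹| := by
  have hpq : |p * q| ≤ B ^ 2 := by
    rw [abs_mul, sq]
    exact mul_le_mul hpB hqB (abs_nonneg q) ((abs_nonneg p).trans hpB)
  rw [abs_inv]
  exact inv_anti₀ (abs_pos.mpr (by simpa using And.intro hp hq)) (by exact_mod_cast hpq)

/-- volume lower bound for a rational simplex.  Here `d = n + 2`: the `d - 1`
points `x i = a i / b i ∈ ℝ^d` (with `a i ∈ ℤ^d`, `b i` nonzero integers, `|b i| ≤ B`) are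
affinely independent, and the `(d-2)`-dimensional volume of their convex hull, computed by
the Gram determinant formula `(1/(d-2)!)·√(det MᵀM)` with `M` the matrix whose columns are
`x i - x last`, is at least `1/(d!·B^{2d})`. -/
theorem stmt6 (n : ℕ) (B : ℤ)
    (a : Fin (n + 1) → Fin (n + 2) → ℤ) (b : Fin (n + 1) → ℤ)
    (hb : ∀ i, b i ≠ 0) (hB : ∀ i, |b i| ≤ B)
    (x : Fin (n + 1) → Fin (n + 2) → ℝ)
    (hx : ∀ i k, x i k = (a i k : ℝ) / (b i : ℝ))
    (hind : AffineIndependent ℝ x) :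
    (1 : ℝ) / (Nat.factorial (n + 2) * (B : ℝ) ^ (2 * (n + 2))) ≤
      (1 / Nat.factorial n) *
        Real.sqrt
          (Matrix.transpose (Matrix.of fun (k : Fin (n + 2)) (i : Fin n) =>
              x i.castSucc k - x (Fin.last n) k) *
            (Matrix.of fun (k : Fin (n + 2)) (i : Fin n) =>
              x i.castSucc k - x (Fin.last n) k)).det := by
  set M : Matrix (Fin (n + 2)) (Fin n) ℝ := of fun k i => x i.castSucc k - x (Fin.last n) k
  set c : Fin n → ℝ := fun i => ((b i.castSucc : ℝ) * b (Fin.last n))⁻¹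
  have hM : LinearIndependent ℝ M.col := hind.linearIndependent_sub_last
  set N : Matrix (Fin (n + 2)) (Fin n) ℤ :=
    of fun k i => b (Fin.last n) * a i.castSucc k - b i.castSucc * a (Fin.last n) k
  have hMN : M = N.map (Int.cast : ℤ → ℝ) * diagonal c := by
    ext k i
    rw [mul_diagonal]
    have hbi := hb i.castSucc
    have hbl := hb (Fin.last n)
    simp only [M, N, c, hx, of_apply, map_apply]
    push_cast
    field_simp
  have hc : ((B : ℝ) ^ (2 * n))⁻¹ ≤ |∏ i, c i| := by
    have hci (i : Fin n) : ((B : ℝ) ^ 2)⁻¹ ≤ |c i| :=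
      inv_sq_le_abs_inv_mul (hb i.castSucc) (hb (Fin.last n)) (hB _) (hB _)
    calc ((B : ℝ) ^ (2 * n))⁻¹ = ∏ _i : Fin n, ((B : ℝ) ^ 2)⁻¹ := by simp [pow_mul]
      _ ≤ ∏ i, |c i| := Finset.prod_le_prod (fun _ _ => by positivity) fun i _ => hci i
      _ = |∏ i, c i| := (Finset.abs_prod _ _).symm
  have hB1 : (1 : ℝ) ≤ B := by exact_mod_cast (Int.one_le_abs (hb 0)).trans (hB 0)
  calc (1 : ℝ) / ((n + 2).factorial * (B : ℝ) ^ (2 * (n + 2)))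
      ≤ 1 / (n.factorial * (B : ℝ) ^ (2 * n)) := by
        gcongr 1 / (?_ * ?_)
        · exact_mod_cast Nat.factorial_le (by omega)
        · exact pow_le_pow_right₀ hB1 (by omega)
    _ = 1 / n.factorial * ((B : ℝ) ^ (2 * n))⁻¹ := by ring
    _ ≤ 1 / n.factorial * √(Mᵀ * M).det := by
        gcongr
        exact hc.trans (abs_prod_le_sqrt_det_transpose_mul_self _ _ hMN hM)
end

section
/- Let L = conv(v_1, ..., v_{t+1}) be a t-dimensional simplex in ℝ^n such that every vertex v_i is at Euclidean distance at least s from the affine hull of the other t vertices. Then L contains a ball of radius s/(t+1) (a ball in the t-dimensional affine hull of L). -/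
/-!
Write a point `x` of the affine span as an affine combination `∑ wⱼ vⱼ` and compare it with the
centroid `c`, whose weights are all `1/(t+1)`. For the weight deviation `δ = w - 1/(t+1)`, which
sums to zero, `vᵢ - (x - c)/δᵢ` lies in the affine span of the facet opposite `vᵢ`, so
`|δᵢ| s ≤ |δᵢ| dist(vᵢ, facet) ≤ dist x c`. Inside the ball of radius `s/(t+1)` this forces
`|δᵢ| ≤ 1/(t+1)`, hence `wᵢ ≥ 0`, and `x` is a convex combination of the vertices.
-/

open Finset Metric

section AffineSpace

variable {ι V P : Type*} [Fintype ι] [SeminormedAddCommGroup V] [NormedSpace ℝ V]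
  [PseudoMetricSpace P] [NormedAddTorsor V P]

theorem abs_mul_le_norm_weightedVSub_of_le_infDist {p : ι → P} {s : ℝ} {i : ι}
    (hi : s ≤ infDist (p i) (affineSpan ℝ (p '' {i}ᶜ))) {w : ι → ℝ} (hw : ∑ j, w j = 0) :
    |w i| * s ≤ ‖univ.weightedVSub p w‖ := by
  classical
  rcases eq_or_ne (w i) 0 with h0 | h0
  · simp [h0]
  set q := univ.affineCombination ℝ p (Pi.single i 1 - (w i)⁻¹ • w)
  have hq_sum : ∑ j, (Pi.single i 1 - (w i)⁻¹ • w : ι → ℝ) j = 1 := by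
    simp [sum_sub_distrib, ← mul_sum, hw]
  have hq_mem : q ∈ affineSpan ℝ (p '' {i}ᶜ) := by
    refine affineCombination_mem_affineSpan_image hq_sum (fun j _ hj => ?_) p
    obtain rfl : j = i := by simpa using hj
    simp [h0]
  have hpq : p i -ᵥ q = (w i)⁻¹ • univ.weightedVSub p w := by
    rw [← univ.affineCombination_piSingle ℝ p (mem_univ i), affineCombination_vsub,
      sub_sub_cancel, map_smul]
  calc |w i| * s ≤ |w i| * dist (p i) q :=
        mul_le_mul_of_nonneg_left (hi.trans (infDist_le_dist_of_mem hq_mem)) (abs_nonneg _)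
    _ = ‖univ.weightedVSub p w‖ := by
      rw [dist_eq_norm_vsub V, hpq, norm_smul, Real.norm_eq_abs, abs_inv,
        mul_inv_cancel_left₀ (abs_ne_zero.2 h0)]

end AffineSpace

section VectorSpace

variable {ι E : Type*} [Fintype ι] [Nonempty ι] [NormedAddCommGroup E] [NormedSpace ℝ E]

theorem centroid_mem_convexHull_range (v : ι → E) :
    univ.centroid ℝ v ∈ convexHull ℝ (Set.range v) :=
  affineCombination_mem_convexHull (fun _ _ => by simp [centroidWeights_apply])
    (sum_centroidWeights_eq_one_of_nonempty ℝ _ univ_nonempty)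

theorem closedBall_centroid_inter_affineSpan_subset_convexHull {v : ι → E} {s : ℝ}
    (hdist : ∀ i, s ≤ infDist (v i) (affineSpan ℝ (v '' {i}ᶜ))) :
    closedBall (univ.centroid ℝ v) (s / Fintype.card ι) ∩ affineSpan ℝ (Set.range v) ⊆
      convexHull ℝ (Set.range v) := by
  rintro x ⟨hx_ball, hx_span⟩
  rw [mem_closedBall] at hx_ball
  rcases le_or_gt s 0 with hs | hs
  · obtain rfl : x = univ.centroid ℝ v :=
      dist_le_zero.1 (hx_ball.trans (div_nonpos_of_nonpos_of_nonneg hs (by positivity)))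
    exact centroid_mem_convexHull_range v
  obtain ⟨w, hw, rfl⟩ := eq_affineCombination_of_mem_affineSpan_of_fintype hx_span
  refine affineCombination_mem_convexHull (fun i _ => ?_) hw
  set N : ℝ := (Fintype.card ι : ℝ)
  have hδ_sum : ∑ j, (w - univ.centroidWeights ℝ : ι → ℝ) j = 0 := by
    simp [sum_sub_distrib, hw]
  have hδ : |w i - N⁻¹| * s ≤ s / N := by
    have key := abs_mul_le_norm_weightedVSub_of_le_infDist (hdist i) hδ_sum
    rw [← affineCombination_vsub, ← dist_eq_norm_vsub, ← centroid_def] at key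
    simpa [centroidWeights_apply, N] using key.trans hx_ball
  have hδ_le : |w i - N⁻¹| ≤ N⁻¹ := by
    rw [div_eq_inv_mul] at hδ
    exact le_of_mul_le_mul_right hδ hs
  linarith [neg_abs_le (w i - N⁻¹)]

end VectorSpace

theorem stmt10_general (n t : ℕ) (s : ℝ)
    (v : Fin (t + 1) → EuclideanSpace ℝ (Fin n))
    (hdist : ∀ i, s ≤ Metric.infDist (v i)
      (affineSpan ℝ (v '' {i}ᶜ) : Set (EuclideanSpace ℝ (Fin n)))) :
    ∃ c : EuclideanSpace ℝ (Fin n),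
      Metric.closedBall c (s / (t + 1)) ∩
          (affineSpan ℝ (Set.range v) : Set (EuclideanSpace ℝ (Fin n))) ⊆
        convexHull ℝ (Set.range v) :=
  ⟨univ.centroid ℝ v, by
    simpa using closedBall_centroid_inter_affineSpan_subset_convexHull hdist⟩

/-- a `t`-dimensional simplex in `ℝ^n` each of whose vertices is at distance
at least `s` from the affine hull of the remaining vertices contains a ball (within the
affine hull of the simplex) of radius `s/(t+1)`. -/
theorem stmt10 (n t : ℕ) (s : ℝ)
    (v : Fin (t + 1) → EuclideanSpace ℝ (Fin n))
    (hind : AffineIndependent ℝ v)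
    (hdist : ∀ i, s ≤ Metric.infDist (v i)
      (affineSpan ℝ (v '' {i}ᶜ) : Set (EuclideanSpace ℝ (Fin n)))) :
    ∃ c : EuclideanSpace ℝ (Fin n),
      Metric.closedBall c (s / (t + 1)) ∩
          (affineSpan ℝ (Set.range v) : Set (EuclideanSpace ℝ (Fin n))) ⊆
        convexHull ℝ (Set.range v) :=
  stmt10_general n t s v hdist
end
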